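/- arXiv:2201.10957 — 2 statements merged into one kernel-verified Lean document; each statement's English description precedes it below -/
import Mathlib

section
/- Let A be a K×K left-stochastic matrix that is strongly connected (primitive), with Perron vector π (the unique vector with positive entries summing to 1 satisfying Aπ = π). Let (A_n)_{n≥1} be i.i.d. random K×K matrices, each taking values in the set of left-stochastic 0/1-valued matrices, with E[A_n] = A. Fix α ∈ [0,1) and set ᾱ = 1−α. For a fixed k, define the random probability vectors w_0 = e_k (the k-th standard basis vector) and w_n = (αI + ᾱA_n) w_{n−1}. Then the Cesàro averages converge almost surely to the Perron vector: (1/i) Σ_{n=1}^{i} w_n → π almost surely as i → ∞. -/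
/-!
Write `Ā = αI + ᾱA`. The increments `ξₙ = wₙ₊₁ - Ā wₙ` are bounded by `1`, and since `Aₙ₊₁` is
independent of `A₁, …, Aₙ` (which determine `wₙ`) with mean `A`, each `ξₙ` is orthogonal to every
bounded function of the past. Hence the partial sums `Sₙ = ξ₀ + ⋯ + ξₙ₋₁` satisfy `E[Sₙ²] ≤ n`, so
`∑ₖ E[(S_{k²}/k²)²] ≤ ∑ₖ 1/k² < ∞` and `S_{k²}/k² → 0` almost surely; since `|Sₙ₊₁ - Sₙ| ≤ 1`, this
interpolates to `Sₙ/n → 0`.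

By telescoping, the Cesàro averages `vᵢ` of `w₁, …, wᵢ` satisfy `vᵢ - Ā vᵢ = Sᵢ/i - Ā(wᵢ - w₀)/i`,
which tends to `0`. The `vᵢ` lie in the compact probability simplex, so every cluster point is a
fixed point of `Ā`, hence of `A`, in the simplex; strong connectivity makes `π` the only one.
-/

open MeasureTheory ProbabilityTheory Filter Topology

variable {K : ℕ}

/-- A `K × K` matrix (encoded as `Fin K → Fin K → ℝ`, entry `M ℓ k` in row `ℓ`, column `k`)
is left-stochastic if it has nonnegative entries and each column sums to 1. -/
def LeftStochastic (M : Fin K → Fin K → ℝ) : Prop :=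
  (∀ l k, 0 ≤ M l k) ∧ ∀ k, ∑ l, M l k = 1

/-- A 0/1-valued matrix. -/
def ZeroOne (M : Fin K → Fin K → ℝ) : Prop := ∀ l k, M l k = 0 ∨ M l k = 1

/-- Strong connectivity of the matrix: between every ordered pair of vertices there is a
path of positive-weight edges, and at least one diagonal entry is positive. -/
def StronglyConnected (M : Fin K → Fin K → ℝ) : Prop :=
  (∀ k l : Fin K, ∃ m : ℕ, 0 < ((Matrix.of M) ^ (m + 1)) l k) ∧ ∃ k, 0 < M k k

/-- The update map `v ↦ (α I + (1-α) M) v`. -/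
def upd (α : ℝ) (M : Fin K → Fin K → ℝ) (v : Fin K → ℝ) : Fin K → ℝ :=
  fun j => α * v j + (1 - α) * ∑ l, M j l * v l

open Matrix Finset

theorem abs_sub_le_one_of_mem_stdSimplex {n : Type*} [Fintype n] {x y : n → ℝ}
    (hx : x ∈ stdSimplex ℝ n) (hy : y ∈ stdSimplex ℝ n) (j : n) : |x j - y j| ≤ 1 := by
  obtain ⟨hx0, hx1⟩ := mem_Icc_of_mem_stdSimplex hx j
  obtain ⟨hy0, hy1⟩ := mem_Icc_of_mem_stdSimplex hy j
  exact abs_sub_le_iff.2 ⟨by linarith, by linarith⟩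

section Stochastic

variable {n : Type*} [DecidableEq n]

def lazy (α : ℝ) (M : Matrix n n ℝ) : Matrix n n ℝ := α • 1 + (1 - α) • M

theorem lazy_sub_lazy (α : ℝ) (M N : Matrix n n ℝ) :
    lazy α M - lazy α N = (1 - α) • (M - N) := by
  simp only [lazy, smul_sub]; abel

variable [Fintype n]

theorem mulVec_mem_stdSimplex {M : Matrix n n ℝ} (hM : M ∈ colStochastic ℝ n) {x : n → ℝ}
    (hx : x ∈ stdSimplex ℝ n) : M *ᵥ x ∈ stdSimplex ℝ n :=
  ⟨nonneg_mulVec_of_mem_colStochastic hM hx.1, (sum_mulVec_of_mem_colStochastic hM).trans hx.2⟩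

theorem lazy_mem_colStochastic {α : ℝ} (hα0 : 0 ≤ α) (hα1 : α ≤ 1) {M : Matrix n n ℝ}
    (hM : M ∈ colStochastic ℝ n) : lazy α M ∈ colStochastic ℝ n :=
  convex_colStochastic (one_mem _) hM hα0 (sub_nonneg.2 hα1) (add_sub_cancel α 1)

theorem lazy_mulVec_eq_self_iff {α : ℝ} (hα : α ≠ 1) {M : Matrix n n ℝ} {x : n → ℝ} :
    lazy α M *ᵥ x = x ↔ M *ᵥ x = x := by
  have h1α : 1 - α ≠ 0 := sub_ne_zero.2 hα.symm
  have : lazy α M *ᵥ x - x = (1 - α) • (M *ᵥ x - x) := by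
    rw [lazy, add_mulVec, smul_mulVec, smul_mulVec, one_mulVec]; module
  rw [← sub_eq_zero, this, smul_eq_zero_iff_right h1α, sub_eq_zero]

theorem pow_mulVec_eq_self {M : Matrix n n ℝ} {x : n → ℝ} (h : M *ᵥ x = x) (p : ℕ) :
    (M ^ p) *ᵥ x = x := by
  induction p with
  | zero => exact one_mulVec x
  | succ p ih => rw [pow_succ, ← mulVec_mulVec, h, ih]

theorem eq_zero_of_mulVec_eq_self {M : Matrix n n ℝ} (hM : M ∈ colStochastic ℝ n)
    (hpath : ∀ k l, ∃ m : ℕ, 0 < (M ^ (m + 1)) l k) {u : n → ℝ} (hu : 0 ≤ u)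
    (hfix : M *ᵥ u = u) {j : n} (hj : u j = 0) : u = 0 := by
  by_contra hne
  obtain ⟨l, hl⟩ := Function.ne_iff.1 hne
  obtain ⟨m, hm⟩ := hpath l j
  -- `u = M ^ (m + 1) *ᵥ u` carries the mass `u l > 0` along a positive path from `l` to `j`.
  have hpos : 0 < ((M ^ (m + 1)) *ᵥ u) j :=
    Finset.sum_pos' (fun i _ => mul_nonneg (nonneg_of_mem_colStochastic (pow_mem hM _)) (hu i))
      ⟨l, mem_univ l, mul_pos hm (lt_of_le_of_ne (hu l) (Ne.symm hl))⟩
  rw [pow_mulVec_eq_self hfix, hj] at hpos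
  exact lt_irrefl 0 hpos

theorem eq_of_mulVec_eq_self_of_mem_stdSimplex {M : Matrix n n ℝ} (hM : M ∈ colStochastic ℝ n)
    (hpath : ∀ k l, ∃ m : ℕ, 0 < (M ^ (m + 1)) l k) {π x : n → ℝ} (hπ : ∀ j, 0 < π j)
    (hπ1 : ∑ j, π j = 1) (hπfix : M *ᵥ π = π) (hx : x ∈ stdSimplex ℝ n)
    (hxfix : M *ᵥ x = x) : x = π := by
  obtain ⟨j, -, hj⟩ := exists_min_image univ (fun i => x i / π i)
    (nonempty_of_sum_ne_zero (hπ1 ▸ one_ne_zero))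
  set c := x j / π j
  have hu : 0 ≤ x - c • π := fun i => by
    simpa [sub_nonneg, ← le_div_iff₀ (hπ i)] using hj i (mem_univ i)
  have hx' : x = c • π := sub_eq_zero.1 <| eq_zero_of_mulVec_eq_self hM hpath hu (j := j)
    (by rw [mulVec_sub, mulVec_smul, hxfix, hπfix]) (by simp [c, div_mul_cancel₀ _ (hπ j).ne'])
  have hc : c = 1 := by simpa [hx', ← mul_sum, hπ1] using hx.2
  rw [hx', hc, one_smul]

theorem mem_stdSimplex_of_mulVec_rec {M : ℕ → Matrix n n ℝ} (hM : ∀ m, M m ∈ colStochastic ℝ n)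
    {v : ℕ → n → ℝ} (h0 : v 0 ∈ stdSimplex ℝ n) (hrec : ∀ m, v (m + 1) = M m *ᵥ v m) (m : ℕ) :
    v m ∈ stdSimplex ℝ n := by
  induction m with
  | zero => exact h0
  | succ m ih => rw [hrec]; exact mulVec_mem_stdSimplex (hM m) ih

end Stochastic

theorem IsCompact.tendsto_of_tendsto_comp {X Y ι : Type*} [TopologicalSpace X]
    [TopologicalSpace Y] [T2Space Y] {S : Set X} (hS : IsCompact S) {g : X → Y}
    (hg : Continuous g) {p : X} {q : Y} (huniq : ∀ x ∈ S, g x = q → x = p) {l : Filter ι}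
    {v : ι → X} (hv : ∀ᶠ i in l, v i ∈ S) (hgv : Tendsto (g ∘ v) l (𝓝 q)) :
    Tendsto v l (𝓝 p) :=
  hS.tendsto_nhds_of_unique_mapClusterPt hv fun x hx hc =>
    huniq x hx (eq_of_nhds_neBot (ClusterPt.mono (hc.continuousAt_comp hg.continuousAt) hgv))

theorem sum_Icc_sub_map_sum_Icc {E : Type*} [AddCommGroup E] (f : E →+ E) (w : ℕ → E) (i : ℕ) :
    ∑ m ∈ Icc 1 i, w m - f (∑ m ∈ Icc 1 i, w m)
      = ∑ m ∈ range i, (w (m + 1) - f (w m)) - f (w i - w 0) := by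
  induction i with
  | zero => simp
  | succ i ih =>
    rw [sum_Icc_succ_top (Nat.le_add_left 1 i), sum_range_succ, map_add,
      show ∀ a b c d : E, a + b - (c + d) = (a - c) + (b - d) from fun _ _ _ _ => by abel, ih]
    simp only [map_sub]
    abel

theorem tendsto_avg_of_tendsto_avg_increment {n : Type*} [Fintype n] [DecidableEq n]
    {L : Matrix n n ℝ} (hL : L ∈ colStochastic ℝ n) {π : n → ℝ}
    (huniq : ∀ x ∈ stdSimplex ℝ n, L *ᵥ x = x → x = π) {w : ℕ → n → ℝ}
    (hw : ∀ i, w i ∈ stdSimplex ℝ n)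
    (h : Tendsto (fun i : ℕ => (i : ℝ)⁻¹ • ∑ m ∈ range i, (w (m + 1) - L *ᵥ w m)) atTop (𝓝 0)) :
    Tendsto (fun i : ℕ => (i : ℝ)⁻¹ • ∑ m ∈ Icc 1 i, w m) atTop (𝓝 π) := by
  have hmem : ∀ᶠ i : ℕ in atTop, (i : ℝ)⁻¹ • ∑ m ∈ Icc 1 i, w m ∈ stdSimplex ℝ n := by
    filter_upwards [eventually_ge_atTop 1] with i hi
    rw [smul_sum]
    refine (convex_stdSimplex ℝ n).sum_mem (fun _ _ => by positivity) ?_ fun m _ => hw m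
    have : (i : ℝ) ≠ 0 := by positivity
    simp [this]
  have hbdd : Tendsto (fun i : ℕ => (i : ℝ)⁻¹ • (L *ᵥ w i - L *ᵥ w 0)) atTop (𝓝 0) := by
    refine tendsto_inv_atTop_nhds_zero_nat.zero_smul_isBoundedUnder_le
      (isBoundedUnder_of ⟨1 + 1, fun i => (norm_sub_le _ _).trans (add_le_add ?_ ?_)⟩) <;>
    exact mem_closedBall_zero_iff.1
      (stdSimplex_subset_closedBall (mulVec_mem_stdSimplex hL (hw _)))
  have hdiff : ∀ i : ℕ,
      (i : ℝ)⁻¹ • ∑ m ∈ Icc 1 i, w m - L *ᵥ ((i : ℝ)⁻¹ • ∑ m ∈ Icc 1 i, w m)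
        = (i : ℝ)⁻¹ • ∑ m ∈ range i, (w (m + 1) - L *ᵥ w m)
          - (i : ℝ)⁻¹ • (L *ᵥ w i - L *ᵥ w 0) := by
    intro i
    have := sum_Icc_sub_map_sum_Icc L.mulVecLin.toAddMonoidHom w i
    simp only [LinearMap.toAddMonoidHom_coe, mulVecLin_apply, mulVec_sub] at this
    rw [mulVec_smul, ← smul_sub, this, smul_sub]
  refine (isCompact_stdSimplex ℝ n).tendsto_of_tendsto_comp
    (continuous_id.sub (continuous_const.matrix_mulVec continuous_id))
    (fun x hx hfx => huniq x hx (sub_eq_zero.1 hfx).symm) hmem ?_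
  simpa [Function.comp_def, hdiff] using h.sub hbdd

theorem tendsto_div_of_tendsto_div_sq {s : ℕ → ℝ} (hs : ∀ n, |s (n + 1) - s n| ≤ 1)
    (h : Tendsto (fun k : ℕ => s (k ^ 2) / (k : ℝ) ^ 2) atTop (𝓝 0)) :
    Tendsto (fun n : ℕ => s n / n) atTop (𝓝 0) := by
  have hlip : ∀ m n, m ≤ n → |s n - s m| ≤ (n : ℝ) - m := by
    intro m n hmn
    induction n, hmn using Nat.le_induction with
    | base => simp
    | succ n _ ih =>
      calc |s (n + 1) - s m| ≤ |s (n + 1) - s n| + |s n - s m| := abs_sub_le _ _ _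
        _ ≤ 1 + ((n : ℝ) - m) := add_le_add (hs n) ih
        _ = ((n + 1 : ℕ) : ℝ) - m := by push_cast; ring
  have hbound : ∀ n : ℕ, |s n / n| ≤ |s (n.sqrt ^ 2) / (n.sqrt : ℝ) ^ 2| + 2 / n.sqrt := by
    intro n
    rcases Nat.eq_zero_or_pos n with rfl | hn
    · simp
    set k := n.sqrt
    have hk : (0 : ℝ) < k := by exact_mod_cast Nat.sqrt_pos.2 hn
    have hkn : k ^ 2 ≤ n := Nat.sqrt_le' n
    have hnk : (n : ℝ) - (k ^ 2 : ℕ) ≤ 2 * k := by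
      have : n < (k + 1) ^ 2 := Nat.lt_succ_sqrt' n
      rw [sub_le_iff_le_add]; exact_mod_cast (by nlinarith : n ≤ 2 * k + k ^ 2)
    have h1 : |s n| ≤ |s (k ^ 2)| + 2 * k := by
      linarith [abs_sub_abs_le_abs_sub (s n) (s (k ^ 2)), hlip _ _ hkn]
    have hkn' : (k : ℝ) ^ 2 ≤ n := by exact_mod_cast hkn
    rw [abs_div, abs_div, Nat.abs_cast, abs_of_pos (by positivity : (0 : ℝ) < k ^ 2)]
    calc |s n| / n ≤ (|s (k ^ 2)| + 2 * k) / k ^ 2 :=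
          div_le_div₀ (by positivity) h1 (by positivity) hkn'
      _ = |s (k ^ 2)| / k ^ 2 + 2 / k := by field_simp
  have hsqrt : Tendsto Nat.sqrt atTop atTop :=
    tendsto_atTop_atTop.2 fun b => ⟨b * b, fun n hn => Nat.le_sqrt.2 hn⟩
  refine squeeze_zero_norm hbound ?_
  simpa [Function.comp_def] using (h.abs.add (tendsto_const_div_atTop_nhds_zero_nat 2)).comp hsqrt

theorem abs_sum_range_le {x : ℕ → ℝ} (hx : ∀ m, |x m| ≤ 1) (n : ℕ) :
    |∑ m ∈ range n, x m| ≤ n :=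
  (abs_sum_le_sum_abs _ _).trans <| (sum_le_sum fun m _ => hx m).trans (by simp)

section OrthogonalIncrements

variable {Ω : Type*} [MeasurableSpace Ω] {P : Measure Ω}

theorem ae_tendsto_zero_of_summable_integral_sq {f : ℕ → Ω → ℝ} (hf : ∀ n, Measurable (f n))
    (hint : ∀ n, Integrable (fun ω => f n ω ^ 2) P)
    (hsum : Summable fun n => ∫ ω, f n ω ^ 2 ∂P) :
    ∀ᵐ ω ∂P, Tendsto (fun n => f n ω) atTop (𝓝 0) := by
  have hmeas : ∀ n, Measurable fun ω => ENNReal.ofReal (f n ω ^ 2) :=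
    fun n => ((hf n).pow_const 2).ennreal_ofReal
  have hfin : ∫⁻ ω, ∑' n, ENNReal.ofReal (f n ω ^ 2) ∂P ≠ ⊤ := by
    rw [lintegral_tsum fun n => (hmeas n).aemeasurable]
    simp_rw [← ofReal_integral_eq_lintegral_ofReal (hint _) (ae_of_all _ fun ω => sq_nonneg _)]
    rw [← ENNReal.ofReal_tsum_of_nonneg (fun n => integral_nonneg fun ω => sq_nonneg _) hsum]
    exact ENNReal.ofReal_ne_top
  filter_upwards [ae_lt_top (Measurable.tsum hmeas) hfin] with ω hω
  have hsq : Tendsto (fun n => f n ω ^ 2) atTop (𝓝 0) := by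
    simpa [Function.comp_def, ENNReal.toReal_ofReal (sq_nonneg _)] using
      (ENNReal.tendsto_toReal ENNReal.zero_ne_top).comp
        (ENNReal.tendsto_atTop_zero_of_tsum_ne_top hω.ne)
  rw [tendsto_zero_iff_abs_tendsto_zero]
  simpa [Function.comp_def, Real.sqrt_sq_eq_abs] using (Real.continuous_sqrt.tendsto 0).comp hsq

variable [IsProbabilityMeasure P] {X : ℕ → Ω → ℝ} (hX : ∀ n, Measurable (X n))
  (hX1 : ∀ n ω, |X n ω| ≤ 1)
  (horth : ∀ n, ∫ ω, (∑ m ∈ range n, X m ω) * X n ω ∂P = 0)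
include hX hX1 horth

theorem integral_sq_sum_range_le (n : ℕ) : ∫ ω, (∑ m ∈ range n, X m ω) ^ 2 ∂P ≤ n := by
  induction n with
  | zero => simp
  | succ n ih =>
    set S := fun ω => ∑ m ∈ range n, X m ω
    have hS : Measurable S := Finset.measurable_sum _ fun m _ => hX m
    have hSb : ∀ ω, |S ω| ≤ n := fun ω => abs_sum_range_le (hX1 · ω) n
    have hint : ∀ f : Ω → ℝ, Measurable f → ∀ C, (∀ ω, |f ω| ≤ C) → Integrable f P :=
      fun f hf C hC => .of_bound hf.aestronglyMeasurable C (ae_of_all _ hC)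
    have hS2 : Integrable (fun ω => S ω ^ 2) P := hint _ (hS.pow_const 2) (n ^ 2) fun ω => by
      rw [abs_pow]; exact pow_le_pow_left₀ (abs_nonneg _) (hSb ω) 2
    have hSX : Integrable (fun ω => 2 * (S ω * X n ω)) P :=
      (hint (fun ω => S ω * X n ω) (hS.mul (hX n)) n fun ω => by
        rw [abs_mul]; nlinarith [abs_nonneg (S ω), abs_nonneg (X n ω), hSb ω, hX1 n ω]).const_mul 2
    have hS2X : Integrable (fun ω => S ω ^ 2 + 2 * (S ω * X n ω)) P := hS2.add hSX
    calc ∫ ω, (∑ m ∈ range (n + 1), X m ω) ^ 2 ∂P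
        = ∫ ω, S ω ^ 2 + 2 * (S ω * X n ω) + X n ω ^ 2 ∂P := by
          simp only [sum_range_succ, S]; ring_nf
      _ ≤ ∫ ω, S ω ^ 2 + 2 * (S ω * X n ω) + 1 ∂P := by
          refine integral_mono (hS2X.add (hint _ ((hX n).pow_const 2) 1 fun ω => ?_))
            (hS2X.add (integrable_const 1)) fun ω => ?_
          · rw [abs_pow]; exact pow_le_one₀ (abs_nonneg _) (hX1 n ω)
          · have := sq_le_one_iff_abs_le_one (X n ω) |>.2 (hX1 n ω)
            simp only; linarith
      _ = ∫ ω, S ω ^ 2 ∂P + 2 * ∫ ω, S ω * X n ω ∂P + 1 := by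
          rw [integral_add hS2X (integrable_const 1), integral_add hS2 hSX,
            integral_const_mul]; simp
      _ ≤ (n + 1 : ℕ) := by rw [horth n]; push_cast; linarith

theorem ae_tendsto_sum_range_div :
    ∀ᵐ ω ∂P, Tendsto (fun n : ℕ => (∑ m ∈ range n, X m ω) / n) atTop (𝓝 0) := by
  set S := fun n ω => ∑ m ∈ range n, X m ω
  have hmeas : ∀ k : ℕ, Measurable fun ω => S (k ^ 2) ω / (k : ℝ) ^ 2 :=
    fun k => (Finset.measurable_sum _ fun m _ => hX m).div_const _
  have hsq_le : ∀ k : ℕ, ∫ ω, (S (k ^ 2) ω / (k : ℝ) ^ 2) ^ 2 ∂P ≤ 1 / (k : ℝ) ^ 2 := fun k =>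
    calc ∫ ω, (S (k ^ 2) ω / (k : ℝ) ^ 2) ^ 2 ∂P
        = (∫ ω, S (k ^ 2) ω ^ 2 ∂P) / ((k : ℝ) ^ 2) ^ 2 := by
          simp_rw [div_pow]; exact integral_div _ _
      _ ≤ (k : ℝ) ^ 2 / ((k : ℝ) ^ 2) ^ 2 := by
          gcongr; exact_mod_cast integral_sq_sum_range_le hX hX1 horth (k ^ 2)
      _ = 1 / (k : ℝ) ^ 2 := by
          rcases eq_or_ne (k : ℝ) 0 with h | h
          · simp [h]
          · field_simp
  have hsub : ∀ᵐ ω ∂P, Tendsto (fun k : ℕ => S (k ^ 2) ω / (k : ℝ) ^ 2) atTop (𝓝 0) := by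
    refine ae_tendsto_zero_of_summable_integral_sq hmeas (fun k => ?_) ?_
    · refine .of_bound ((hmeas k).pow_const 2).aestronglyMeasurable 1 (ae_of_all _ fun ω => ?_)
      rw [Real.norm_eq_abs, abs_pow, abs_div, abs_of_nonneg (by positivity : (0 : ℝ) ≤ k ^ 2)]
      refine pow_le_one₀ (by positivity) (div_le_one_of_le₀ ?_ (by positivity))
      exact_mod_cast abs_sum_range_le (hX1 · ω) (k ^ 2)
    · exact .of_nonneg_of_le (fun k => integral_nonneg fun ω => sq_nonneg _) hsq_le
        (Real.summable_one_div_nat_pow.2 one_lt_two)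
  filter_upwards [hsub] with ω hω
  exact tendsto_div_of_tendsto_div_sq (fun n => by simpa [S, sum_range_succ] using hX1 n ω) hω

end OrthogonalIncrements

theorem integral_mul_eq_zero_of_indep {Ω : Type*} {m₁ m₂ mΩ : MeasurableSpace Ω}
    {P : Measure Ω} (hm₁ : m₁ ≤ mΩ) (hm₂ : m₂ ≤ mΩ) (h : Indep m₁ m₂ P) {Z D : Ω → ℝ}
    (hZ : Measurable[m₁] Z) (hD : Measurable[m₂] D) (hD0 : ∫ ω, D ω ∂P = 0) :
    ∫ ω, Z ω * D ω ∂P = 0 := by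
  have hZD : IndepFun Z D P :=
    (IndepFun_iff_Indep _ _ _).2 (indep_of_indep_of_le h hZ.comap_le hD.comap_le)
  rw [hZD.integral_fun_mul_eq_mul_integral (hZ.mono hm₁ le_rfl).aestronglyMeasurable
    (hD.mono hm₂ le_rfl).aestronglyMeasurable, hD0, mul_zero]

theorem leftStochastic_iff_mem_colStochastic {M : Fin K → Fin K → ℝ} :
    LeftStochastic M ↔ Matrix.of M ∈ colStochastic ℝ (Fin K) :=
  mem_colStochastic_iff_sum.symm

theorem upd_eq_lazy_mulVec (α : ℝ) (M : Fin K → Fin K → ℝ) (v : Fin K → ℝ) :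
    upd α M v = lazy α (Matrix.of M) *ᵥ v := by
  rw [lazy, add_mulVec, smul_mulVec, smul_mulVec, one_mulVec]
  ext j
  simp [upd, mulVec, dotProduct]

section RandomIteration

variable {Ω : Type*} {mΩ : MeasurableSpace Ω} {P : Measure Ω}
  {An : ℕ → Ω → Fin K → Fin K → ℝ} {α : ℝ} {w : ℕ → Ω → Fin K → ℝ}
  (hwrec : ∀ n ω, w (n + 1) ω = upd α (An (n + 1) ω) (w n ω))
include hwrec

theorem measurable_iterate (ℱ : Filtration ℕ mΩ) (hAn : ∀ n, Measurable[ℱ n] (An n))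
    {v₀ : Fin K → ℝ} (hw0 : ∀ ω, w 0 ω = v₀) (n : ℕ) : Measurable[ℱ n] (w n) := by
  induction n with
  | zero => rw [funext hw0]; exact measurable_const
  | succ n ih =>
    have hupd : Continuous fun p : (Fin K → Fin K → ℝ) × (Fin K → ℝ) => upd α p.1 p.2 := by
      unfold upd; fun_prop
    rw [show w (n + 1) = fun ω => upd α (An (n + 1) ω) (w n ω) from funext (hwrec n)]
    exact hupd.measurable.comp ((hAn (n + 1)).prodMk (ih.mono (ℱ.mono n.le_succ) le_rfl))

variable [IsProbabilityMeasure P] (ℱ : Filtration ℕ mΩ)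
  (hindep : ∀ n, Indep (MeasurableSpace.comap (An (n + 1)) inferInstance) (ℱ n) P)
  (hmeas : ∀ n, Measurable (An n)) (hval : ∀ n ω, LeftStochastic (An n ω))
  {A : Fin K → Fin K → ℝ} (hmean : ∀ n l k, ∫ ω, An n ω l k ∂P = A l k)
  (hw : ∀ n ω, w n ω ∈ stdSimplex ℝ (Fin K)) (hadapt : ∀ n, Measurable[ℱ n] (w n))
include hindep hmeas hval hmean hw hadapt

theorem integral_mul_increment_eq_zero (n : ℕ) (j : Fin K) {Z : Ω → ℝ} (hZ : Measurable[ℱ n] Z)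
    {C : ℝ} (hZC : ∀ ω, |Z ω| ≤ C) :
    ∫ ω, Z ω * (w (n + 1) ω - lazy α (Matrix.of A) *ᵥ w n ω) j ∂P = 0 := by
  set D : Fin K → Ω → ℝ := fun l ω => An (n + 1) ω j l - A j l
  have hD : ∀ l, Measurable[MeasurableSpace.comap (An (n + 1)) inferInstance] (D l) := fun l =>
    ((measurable_pi_apply l).comp
      ((measurable_pi_apply j).comp (comap_measurable (An (n + 1))))).sub_const _
  have hAnint : ∀ l, Integrable (fun ω => An (n + 1) ω j l) P := fun l => by
    refine .of_bound ((measurable_pi_apply l).comp ((measurable_pi_apply j).comp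
      (hmeas (n + 1)))).aestronglyMeasurable 1 (ae_of_all _ fun ω => ?_)
    rw [Real.norm_eq_abs, abs_of_nonneg ((hval (n + 1) ω).1 j l)]
    exact le_one_of_mem_colStochastic (leftStochastic_iff_mem_colStochastic.1 (hval (n + 1) ω))
  have hDint : ∀ l, Integrable (D l) P := fun l => (hAnint l).sub (integrable_const _)
  have hD0 : ∀ l, ∫ ω, D l ω ∂P = 0 := fun l => by
    simp [D, integral_sub (hAnint l) (integrable_const _), hmean]
  have hZw : ∀ l, Measurable[ℱ n] fun ω => Z ω * w n ω l :=
    fun l => hZ.mul ((measurable_pi_apply l).comp (hadapt n))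
  have hZwC : ∀ l ω, ‖Z ω * w n ω l‖ ≤ C := fun l ω => by
    rw [Real.norm_eq_abs, abs_mul, abs_of_nonneg ((hw n ω).1 l)]
    exact (mul_le_of_le_one_right (abs_nonneg _) (mem_Icc_of_mem_stdSimplex (hw n ω) l).2).trans
      (hZC ω)
  have hincr : ∀ ω, (w (n + 1) ω - lazy α (Matrix.of A) *ᵥ w n ω) j
      = (1 - α) * ∑ l, w n ω l * D l ω := fun ω => by
    rw [hwrec, upd_eq_lazy_mulVec, ← sub_mulVec, lazy_sub_lazy, smul_mulVec]
    simp [mulVec, dotProduct, D, mul_comm]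
  calc ∫ ω, Z ω * (w (n + 1) ω - lazy α (Matrix.of A) *ᵥ w n ω) j ∂P
      = ∫ ω, (1 - α) * ∑ l, Z ω * w n ω l * D l ω ∂P := by
        refine integral_congr_ae (ae_of_all _ fun ω => ?_)
        simp only [hincr, mul_sum]
        exact sum_congr rfl fun l _ => by ring
    _ = (1 - α) * ∑ l, ∫ ω, Z ω * w n ω l * D l ω ∂P := by
        rw [integral_const_mul, integral_finsetSum _ fun l _ => (hDint l).bdd_mul
          ((hZw l).mono (ℱ.le n) le_rfl).aestronglyMeasurable (ae_of_all _ (hZwC l))]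
    _ = 0 := by
        rw [sum_eq_zero fun l _ => integral_mul_eq_zero_of_indep (ℱ.le n)
          (hmeas (n + 1)).comap_le (hindep n).symm (hZw l) (hD l) (hD0 l), mul_zero]

theorem ae_tendsto_avg_increment (hA : LeftStochastic A) (hα0 : 0 ≤ α) (hα1 : α ≤ 1) :
    ∀ᵐ ω ∂P, Tendsto (fun i : ℕ => (i : ℝ)⁻¹ •
      ∑ m ∈ range i, (w (m + 1) ω - lazy α (Matrix.of A) *ᵥ w m ω)) atTop (𝓝 0) := by
  set L := lazy α (Matrix.of A)
  have hL : L ∈ colStochastic ℝ (Fin K) :=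
    lazy_mem_colStochastic hα0 hα1 (leftStochastic_iff_mem_colStochastic.1 hA)
  have hξ : ∀ m j, Measurable[ℱ (m + 1)] fun ω => (w (m + 1) ω - L *ᵥ w m ω) j := fun m j =>
    (measurable_pi_apply j).comp ((hadapt (m + 1)).sub
      ((continuous_const.matrix_mulVec continuous_id).measurable.comp
        ((hadapt m).mono (ℱ.mono m.le_succ) le_rfl)))
  have hξ1 : ∀ m ω j, |(w (m + 1) ω - L *ᵥ w m ω) j| ≤ 1 := fun m ω =>
    abs_sub_le_one_of_mem_stdSimplex (hw (m + 1) ω) (mulVec_mem_stdSimplex hL (hw m ω))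
  have hcoord : ∀ j, ∀ᵐ ω ∂P, Tendsto (fun i : ℕ =>
      (∑ m ∈ range i, (w (m + 1) ω - L *ᵥ w m ω) j) / i) atTop (𝓝 0) := fun j =>
    ae_tendsto_sum_range_div (fun m => (hξ m j).mono (ℱ.le _) le_rfl) (fun m ω => hξ1 m ω j)
      fun n => integral_mul_increment_eq_zero hwrec ℱ hindep hmeas hval hmean hw hadapt n j
        (Finset.measurable_sum _ fun m hm => (hξ m j).mono (ℱ.mono (mem_range.1 hm)) le_rfl)
        (fun ω => abs_sum_range_le (fun m => hξ1 m ω j) n)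
  filter_upwards [ae_all_iff.2 hcoord] with ω hω
  exact tendsto_pi_nhds.2 fun j => by simpa [Finset.sum_apply, div_eq_inv_mul] using hω j

end RandomIteration

theorem statement0_general
    {Ω : Type*} [MeasurableSpace Ω] (P : Measure Ω) [IsProbabilityMeasure P]
    (A : Fin K → Fin K → ℝ) (hA : LeftStochastic A) (hAsc : StronglyConnected A)
    (π : Fin K → ℝ) (hπpos : ∀ j, 0 < π j) (hπsum : ∑ j, π j = 1)
    (hπfix : ∀ j, ∑ l, A j l * π l = π j)
    (An : ℕ → Ω → Fin K → Fin K → ℝ) (hmeas : ∀ n, Measurable (An n))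
    (hval : ∀ n ω, LeftStochastic (An n ω) ∧ ZeroOne (An n ω))
    (hiid : iIndepFun An P)
    (hmean : ∀ n l k, ∫ ω, An n ω l k ∂P = A l k)
    (α : ℝ) (hα0 : 0 ≤ α) (hα1 : α < 1) (k : Fin K)
    (w : ℕ → Ω → Fin K → ℝ)
    (hw0 : ∀ ω, w 0 ω = fun j => if j = k then (1 : ℝ) else 0)
    (hwrec : ∀ n ω, w (n + 1) ω = upd α (An (n + 1) ω) (w n ω)) :
    ∀ᵐ ω ∂P, Tendsto (fun i : ℕ => (i : ℝ)⁻¹ • ∑ n ∈ Finset.Icc 1 i, w n ω)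
      atTop (𝓝 π) := by
  have hAn : ∀ n ω, Matrix.of (An n ω) ∈ colStochastic ℝ (Fin K) :=
    fun n ω => leftStochastic_iff_mem_colStochastic.1 (hval n ω).1
  have hL : lazy α (Matrix.of A) ∈ colStochastic ℝ (Fin K) :=
    lazy_mem_colStochastic hα0 hα1.le (leftStochastic_iff_mem_colStochastic.1 hA)
  have hw : ∀ n ω, w n ω ∈ stdSimplex ℝ (Fin K) := fun n ω =>
    mem_stdSimplex_of_mulVec_rec (v := (w · ω))
      (fun m => lazy_mem_colStochastic hα0 hα1.le (hAn (m + 1) ω))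
      (by simpa [hw0, eq_comm] using ite_eq_mem_stdSimplex ℝ k)
      (fun m => by rw [hwrec, upd_eq_lazy_mulVec]) n
  set ℱ := Filtration.natural An fun n => (hmeas n).stronglyMeasurable
  have hadapt : ∀ n, Measurable[ℱ n] (w n) := measurable_iterate hwrec ℱ
    (fun n => (Filtration.stronglyAdapted_natural (β := fun _ => Fin K → Fin K → ℝ) _ n).measurable)
    hw0
  filter_upwards [ae_tendsto_avg_increment hwrec ℱ
    (fun n => hiid.indep_comap_natural_of_lt _ n.lt_succ_self) hmeas (fun n ω => (hval n ω).1)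
    hmean hw hadapt hA hα0 hα1.le] with ω hω
  refine tendsto_avg_of_tendsto_avg_increment hL (fun x hx hfix => ?_) (fun n => hw n ω) hω
  exact eq_of_mulVec_eq_self_of_mem_stdSimplex (leftStochastic_iff_mem_colStochastic.1 hA)
    hAsc.1 hπpos hπsum (funext hπfix) hx ((lazy_mulVec_eq_self_iff hα1.ne).1 hfix)

/-- with i.i.d. random left-stochastic 0/1 matrices `A_n` of mean `A`
(left-stochastic, strongly connected, Perron vector `π`), the Cesàro averages of the random
probability vectors `w_0 = e_k`, `w_n = (αI + (1-α)A_n) w_{n-1}` converge a.s. to `π`. -/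
theorem statement0 [NeZero K]
    {Ω : Type*} [MeasurableSpace Ω] (P : Measure Ω) [IsProbabilityMeasure P]
    (A : Fin K → Fin K → ℝ) (hA : LeftStochastic A) (hAsc : StronglyConnected A)
    (π : Fin K → ℝ) (hπpos : ∀ j, 0 < π j) (hπsum : ∑ j, π j = 1)
    (hπfix : ∀ j, ∑ l, A j l * π l = π j)
    (An : ℕ → Ω → Fin K → Fin K → ℝ) (hmeas : ∀ n, Measurable (An n))
    (hval : ∀ n ω, LeftStochastic (An n ω) ∧ ZeroOne (An n ω))
    (hiid : iIndepFun An P)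
    (hid : ∀ n, IdentDistrib (An n) (An 1) P P)
    (hmean : ∀ n l k, ∫ ω, An n ω l k ∂P = A l k)
    (α : ℝ) (hα0 : 0 ≤ α) (hα1 : α < 1) (k : Fin K)
    (w : ℕ → Ω → Fin K → ℝ)
    (hw0 : ∀ ω, w 0 ω = fun j => if j = k then (1 : ℝ) else 0)
    (hwrec : ∀ n ω, w (n + 1) ω = upd α (An (n + 1) ω) (w n ω)) :
    ∀ᵐ ω ∂P, Tendsto (fun i : ℕ => (i : ℝ)⁻¹ • ∑ n ∈ Finset.Icc 1 i, w n ω)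
      atTop (𝓝 π) :=
  statement0_general P A hA hAsc π hπpos hπsum hπfix An hmeas hval hiid hmean α hα0 hα1 k w hw0
    hwrec
end

section
/- Let A be a K×K left-stochastic, strongly connected matrix with Perron vector π, let (A_n)_{n≥1} be i.i.d. random left-stochastic 0/1-valued matrices with E[A_n] = A, fix α ∈ [0,1), ᾱ = 1−α, and define w_0 = e_k, w_n = (αI + ᾱA_n) w_{n−1}. Suppose C > 0 and ρ ∈ (0,1) are such that ‖(αI + ᾱA)^j (w − π)‖ ≤ C ρ^j for every probability vector w and every j ≥ 0, where ‖·‖ is the Euclidean norm. Then for every ε > 0 and every i ≥ 1, P( ‖ (1/i) Σ_{n=1}^{i} w_n − π ‖² > ε ) ≤ (4 + 4Cρ/(1−ρ)) / (ε i). -/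
open MeasureTheory ProbabilityTheory Filter Topology

variable {K : ℕ}

/-- Euclidean norm of a vector in `ℝ^K`. -/
noncomputable def enorm' (v : Fin K → ℝ) : ℝ := Real.sqrt (∑ j, v j ^ 2)

/-!
Write `d_n = w_n - π` and `B = αI + (1 - α)A`. Because `A_{n+1}` is independent of
`A_1, …, A_n`, has mean `A`, and `Bπ = π`, one step of the walk gives
`E[X d_{m+1}] = B E[X d_m]` for every integrable `X` determined by `A_1, …, A_m`; hence
`E[X d_{m+t}] = B^t E[X d_m]`. Taking `X = d_{n,j}` turns `E⟨d_n, d_{n+t}⟩` into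
`E⟨d_n, B^t d_n⟩ ≤ ‖d_n‖ C ρ^t ≤ 2 C ρ^t`, while `E‖d_n‖² ≤ 2`. Summing these geometrically decaying
covariances gives `E‖(1/i) ∑ d_n‖² ≤ (2 + 4Cρ/(1 - ρ))/i`, and Markov's inequality concludes.
-/
open scoped Matrix

def lazyMatrix (α : ℝ) (M : Fin K → Fin K → ℝ) : Matrix (Fin K) (Fin K) ℝ :=
  α • (1 : Matrix (Fin K) (Fin K) ℝ) + (1 - α) • Matrix.of M

lemma upd_eq_mulVec (α : ℝ) (M : Fin K → Fin K → ℝ) (v : Fin K → ℝ) :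
    upd α M v = lazyMatrix α M *ᵥ v := by
  ext j
  simp [upd, lazyMatrix, Matrix.mulVec, dotProduct, add_mul, Finset.sum_add_distrib, mul_assoc,
    Matrix.one_apply, Finset.mul_sum]

lemma LeftStochastic.col_mem_stdSimplex {M : Fin K → Fin K → ℝ} (hM : LeftStochastic M)
    (k : Fin K) : (fun l => M l k) ∈ stdSimplex ℝ (Fin K) :=
  ⟨fun l => hM.1 l k, hM.2 k⟩

lemma LeftStochastic.mulVec_mem_stdSimplex {M : Fin K → Fin K → ℝ} (hM : LeftStochastic M)
    {v : Fin K → ℝ} (hv : v ∈ stdSimplex ℝ (Fin K)) :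
    (fun j => ∑ l, M j l * v l) ∈ stdSimplex ℝ (Fin K) := by
  refine ⟨fun j => Finset.sum_nonneg fun l _ => mul_nonneg (hM.1 j l) (hv.1 l), ?_⟩
  rw [Finset.sum_comm]
  simp_rw [← Finset.sum_mul, hM.2, one_mul, hv.2]

lemma upd_mem_stdSimplex {α : ℝ} (hα0 : 0 ≤ α) (hα1 : α ≤ 1) {M : Fin K → Fin K → ℝ}
    (hM : LeftStochastic M) {v : Fin K → ℝ} (hv : v ∈ stdSimplex ℝ (Fin K)) :
    upd α M v ∈ stdSimplex ℝ (Fin K) :=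
  convex_stdSimplex ℝ (Fin K) hv (hM.mulVec_mem_stdSimplex hv) hα0 (sub_nonneg.2 hα1)
    (add_sub_cancel α 1)

lemma sum_sq_sub_le_two {ι : Type*} [Fintype ι] {v p : ι → ℝ} (hv : v ∈ stdSimplex ℝ ι)
    (hp : p ∈ stdSimplex ℝ ι) : ∑ j, (v j - p j) ^ 2 ≤ 2 := by
  have hterm : ∀ j, (v j - p j) ^ 2 ≤ v j + p j := fun j => by
    obtain ⟨hv0, hv1⟩ := mem_Icc_of_mem_stdSimplex hv j
    obtain ⟨hp0, hp1⟩ := mem_Icc_of_mem_stdSimplex hp j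
    nlinarith
  calc ∑ j, (v j - p j) ^ 2 ≤ ∑ j, (v j + p j) := Finset.sum_le_sum fun j _ => hterm j
    _ = 2 := by rw [Finset.sum_add_distrib, hv.2, hp.2]; norm_num

lemma sum_sub_mul_le_two_mul_enorm' {v p : Fin K → ℝ} (hv : v ∈ stdSimplex ℝ (Fin K))
    (hp : p ∈ stdSimplex ℝ (Fin K)) (u : Fin K → ℝ) :
    ∑ j, (v j - p j) * u j ≤ 2 * enorm' u := by
  have hsqrt : √(∑ j, (v j - p j) ^ 2) ≤ 2 := by
    rw [Real.sqrt_le_left (by norm_num)]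
    linarith [sum_sq_sub_le_two hv hp]
  calc ∑ j, (v j - p j) * u j ≤ √(∑ j, (v j - p j) ^ 2) * enorm' u :=
        Real.sum_mul_le_sqrt_mul_sqrt _ _ _
    _ ≤ 2 * enorm' u := mul_le_mul_of_nonneg_right hsqrt (Real.sqrt_nonneg _)

lemma sum_pow_le_div_one_sub {ρ : ℝ} (hρ0 : 0 ≤ ρ) (hρ1 : ρ < 1) {s : Finset ℕ} {g : ℕ → ℕ}
    (hg : Set.InjOn g s) (hg1 : ∀ m ∈ s, 1 ≤ g m) : ∑ m ∈ s, ρ ^ g m ≤ ρ / (1 - ρ) := by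
  have hinj : Set.InjOn (fun m => g m - 1) s := fun a ha b hb hab =>
    hg ha hb (by have := hg1 a ha; have := hg1 b hb; simp only at hab; omega)
  calc ∑ m ∈ s, ρ ^ g m = ρ * ∑ t ∈ s.image (fun m => g m - 1), ρ ^ t := by
        rw [Finset.sum_image hinj, Finset.mul_sum]
        refine Finset.sum_congr rfl fun m hm => ?_
        rw [← pow_succ', Nat.sub_add_cancel (hg1 m hm)]
    _ ≤ ρ * ∑' t, ρ ^ t :=
        mul_le_mul_of_nonneg_left ((summable_geometric_of_lt_one hρ0 hρ1).sum_le_tsum _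
          fun t _ => pow_nonneg hρ0 t) hρ0
    _ = ρ / (1 - ρ) := by rw [tsum_geometric_of_lt_one hρ0 hρ1, div_eq_mul_inv]

lemma sum_sum_le_of_geometric_decay {a : ℕ → ℕ → ℝ} {D C ρ : ℝ} (hC : 0 ≤ C) (hρ0 : 0 ≤ ρ)
    (hρ1 : ρ < 1) (hsymm : ∀ n m, a n m = a m n) (hdiag : ∀ n, a n n ≤ D)
    (hoff : ∀ n t, a n (n + t + 1) ≤ C * ρ ^ (t + 1)) (s : Finset ℕ) :
    ∑ n ∈ s, ∑ m ∈ s, a n m ≤ s.card * (D + 2 * (C * ρ / (1 - ρ))) := by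
  have hup : ∀ n m, n < m → a n m ≤ C * ρ ^ (m - n) := fun n m h => by
    simpa [show n + (m - n - 1) + 1 = m by omega, show m - n - 1 + 1 = m - n by omega]
      using hoff n (m - n - 1)
  have hrow : ∀ n ∈ s, ∑ m ∈ s, a n m ≤ D + 2 * (C * ρ / (1 - ρ)) := fun n hn => by
    have hpt : ∀ m, a n m ≤ (if n = m then D else 0) + (if n < m then C * ρ ^ (m - n) else 0)
        + (if m < n then C * ρ ^ (n - m) else 0) := fun m => by
      rcases lt_trichotomy n m with h | rfl | h
      · simp [h, h.ne, h.not_gt, hup n m h]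
      · simp [hdiag]
      · simp [h, h.ne', h.not_gt, hsymm n m, hup m n h]
    calc ∑ m ∈ s, a n m ≤ ∑ m ∈ s, ((if n = m then D else 0)
          + (if n < m then C * ρ ^ (m - n) else 0) + (if m < n then C * ρ ^ (n - m) else 0)) :=
          Finset.sum_le_sum fun m _ => hpt m
      _ = D + C * ∑ m ∈ s.filter (n < ·), ρ ^ (m - n)
          + C * ∑ m ∈ s.filter (· < n), ρ ^ (n - m) := by
          rw [Finset.sum_add_distrib, Finset.sum_add_distrib, Finset.sum_ite_eq s n, if_pos hn,
            ← Finset.sum_filter, ← Finset.sum_filter, Finset.mul_sum, Finset.mul_sum]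
      _ ≤ D + C * (ρ / (1 - ρ)) + C * (ρ / (1 - ρ)) := by
          gcongr
          · exact sum_pow_le_div_one_sub hρ0 hρ1 (fun a ha b hb hab => by
              simp only [Finset.coe_filter, Set.mem_ofPred_eq] at ha hb hab; omega)
              fun m hm => by simp only [Finset.mem_filter] at hm; omega
          · exact sum_pow_le_div_one_sub hρ0 hρ1 (fun a ha b hb hab => by
              simp only [Finset.coe_filter, Set.mem_ofPred_eq] at ha hb hab; omega)
              fun m hm => by simp only [Finset.mem_filter] at hm; omega
      _ = D + 2 * (C * ρ / (1 - ρ)) := by ring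
  calc ∑ n ∈ s, ∑ m ∈ s, a n m ≤ ∑ n ∈ s, (D + 2 * (C * ρ / (1 - ρ))) := Finset.sum_le_sum hrow
    _ = s.card * (D + 2 * (C * ρ / (1 - ρ))) := by rw [Finset.sum_const, nsmul_eq_mul]

lemma sum_sq_average_sub {ι κ : Type*} [Fintype κ] {s : Finset ι} (hs : s.Nonempty)
    (x : ι → κ → ℝ) (p : κ → ℝ) :
    ∑ j, ((s.card : ℝ)⁻¹ * ∑ n ∈ s, x n j - p j) ^ 2
      = ((s.card : ℝ)⁻¹) ^ 2 * ∑ n ∈ s, ∑ m ∈ s, ∑ j, (x n j - p j) * (x m j - p j) := by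
  have hcard : (s.card : ℝ) ≠ 0 := by exact_mod_cast hs.card_pos.ne'
  have hcentre : ∀ j, (s.card : ℝ)⁻¹ * ∑ n ∈ s, x n j - p j
      = (s.card : ℝ)⁻¹ * ∑ n ∈ s, (x n j - p j) := fun j => by
    rw [Finset.sum_sub_distrib, Finset.sum_const, nsmul_eq_mul, mul_sub,
      inv_mul_cancel_left₀ hcard]
  simp_rw [hcentre, mul_pow, sq (∑ n ∈ s, _), Finset.sum_mul_sum, ← Finset.mul_sum]
  rw [Finset.sum_comm]
  refine congrArg _ (Finset.sum_congr rfl fun n _ => ?_)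
  simp_rw [Finset.mul_sum]
  exact Finset.sum_comm


lemma measureReal_lt_sum_sq_average_sub_le {Ω : Type*} [MeasurableSpace Ω] {P : Measure Ω}
    [IsFiniteMeasure P] {ι : Type*} [Fintype ι] {x : ℕ → Ω → ι → ℝ} {p : ι → ℝ} {D C ρ : ℝ}
    (hC : 0 ≤ C) (hρ0 : 0 ≤ ρ) (hρ1 : ρ < 1)
    (hint : ∀ n m, Integrable (fun ω => ∑ j, (x n ω j - p j) * (x m ω j - p j)) P)
    (hdiag : ∀ n, ∫ ω, ∑ j, (x n ω j - p j) * (x n ω j - p j) ∂P ≤ D)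
    (hoff : ∀ n t, ∫ ω, ∑ j, (x n ω j - p j) * (x (n + t + 1) ω j - p j) ∂P ≤ C * ρ ^ (t + 1))
    {s : Finset ℕ} (hs : s.Nonempty) {ε : ℝ} (hε : 0 < ε) :
    (P {ω | ε < ∑ j, ((s.card : ℝ)⁻¹ * ∑ n ∈ s, x n ω j - p j) ^ 2}).toReal
      ≤ (D + 2 * (C * ρ / (1 - ρ))) / (ε * s.card) := by
  set f : Ω → ℝ := fun ω => ∑ j, ((s.card : ℝ)⁻¹ * ∑ n ∈ s, x n ω j - p j) ^ 2
  have hf : f = fun ω => ((s.card : ℝ)⁻¹) ^ 2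
      * ∑ n ∈ s, ∑ m ∈ s, ∑ j, (x n ω j - p j) * (x m ω j - p j) :=
    funext fun ω => sum_sq_average_sub hs (x · ω) p
  have hf_int : Integrable f P := by
    rw [hf]
    exact (integrable_finsetSum _ fun n _ => integrable_finsetSum _ fun m _ => hint n m).const_mul _
  have hsymm : ∀ n m, ∫ ω, ∑ j, (x n ω j - p j) * (x m ω j - p j) ∂P
      = ∫ ω, ∑ j, (x m ω j - p j) * (x n ω j - p j) ∂P := fun n m => by
    simp_rw [mul_comm (x n _ _ - _)]
  have hmean : ∫ ω, f ω ∂P ≤ (D + 2 * (C * ρ / (1 - ρ))) / s.card := by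
    have hcard : (0 : ℝ) < s.card := by exact_mod_cast hs.card_pos
    rw [hf, integral_const_mul, integral_finsetSum _ fun n _ =>
      integrable_finsetSum _ fun m _ => hint n m]
    simp_rw [integral_finsetSum _ fun m _ => hint _ m]
    calc ((s.card : ℝ)⁻¹) ^ 2 * ∑ n ∈ s, ∑ m ∈ s, ∫ ω, ∑ j, (x n ω j - p j) * (x m ω j - p j) ∂P
        ≤ ((s.card : ℝ)⁻¹) ^ 2 * (s.card * (D + 2 * (C * ρ / (1 - ρ)))) := by
          gcongr
          exact sum_sum_le_of_geometric_decay hC hρ0 hρ1 hsymm hdiag hoff s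
      _ = (D + 2 * (C * ρ / (1 - ρ))) / s.card := by field_simp
  have hmarkov : ε * P.real {ω | ε ≤ f ω} ≤ ∫ ω, f ω ∂P :=
    mul_meas_ge_le_integral_of_nonneg
      (ae_of_all _ fun ω => Finset.sum_nonneg fun j _ => sq_nonneg _) hf_int ε
  calc (P {ω | ε < f ω}).toReal ≤ P.real {ω | ε ≤ f ω} :=
        measureReal_mono (Set.ofPred_subset_ofPred.2 fun _ => le_of_lt)
    _ ≤ (∫ ω, f ω ∂P) / ε := by rwa [le_div_iff₀' hε]
    _ ≤ (D + 2 * (C * ρ / (1 - ρ))) / s.card / ε := by gcongr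
    _ = (D + 2 * (C * ρ / (1 - ρ))) / (ε * s.card) := by rw [div_div, mul_comm ε]

lemma integrable_apply_of_leftStochastic {Ω : Type*} [MeasurableSpace Ω] {P : Measure Ω}
    [IsFiniteMeasure P] {M : Ω → Fin K → Fin K → ℝ} (hM : Measurable M)
    (hM_st : ∀ ω, LeftStochastic (M ω)) (l r : Fin K) : Integrable (fun ω => M ω l r) P :=
  .of_bound ((measurable_pi_apply r).comp ((measurable_pi_apply l).comp hM)).aestronglyMeasurable 1
    (ae_of_all _ fun ω => by
      rw [Real.norm_of_nonneg ((hM_st ω).1 l r)]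
      exact (mem_Icc_of_mem_stdSimplex ((hM_st ω).col_mem_stdSimplex r) l).2)

lemma mem_stdSimplex_of_upd_recursion {α : ℝ} (hα0 : 0 ≤ α) (hα1 : α ≤ 1)
    {M : ℕ → Fin K → Fin K → ℝ} (hM : ∀ n, LeftStochastic (M n)) {v : ℕ → Fin K → ℝ}
    (h0 : v 0 ∈ stdSimplex ℝ (Fin K)) (hrec : ∀ n, v (n + 1) = upd α (M (n + 1)) (v n)) (n : ℕ) :
    v n ∈ stdSimplex ℝ (Fin K) := by
  induction n with
  | zero => exact h0
  | succ n ih => exact hrec n ▸ upd_mem_stdSimplex hα0 hα1 (hM (n + 1)) ih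

lemma abs_sub_le_one_of_mem_stdSimplex_s1 {ι : Type*} [Fintype ι] {v p : ι → ℝ}
    (hv : v ∈ stdSimplex ℝ ι) (hp : p ∈ stdSimplex ℝ ι) (j : ι) : |v j - p j| ≤ 1 := by
  obtain ⟨hv0, hv1⟩ := mem_Icc_of_mem_stdSimplex hv j
  obtain ⟨hp0, hp1⟩ := mem_Icc_of_mem_stdSimplex hp j
  exact abs_sub_le_iff.2 ⟨by linarith, by linarith⟩

lemma measurable_upd (α : ℝ) : Measurable (Function.uncurry (upd (K := K) α)) := by
  refine Continuous.measurable (continuous_pi fun j => ?_)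
  simp only [Function.uncurry, upd]
  fun_prop

lemma ProbabilityTheory.iIndepFun.indep_comap_natural {Ω β : Type*} {mΩ : MeasurableSpace Ω}
    {P : Measure Ω} [TopologicalSpace β] [TopologicalSpace.MetrizableSpace β]
    [mβ : MeasurableSpace β] [BorelSpace β] {X : ℕ → Ω → β} (hX : ∀ n, StronglyMeasurable (X n))
    (hind : iIndepFun X P) {m n : ℕ} (hmn : m < n) :
    Indep (MeasurableSpace.comap (X n) mβ) (Filtration.natural X hX m) P := by
  have hdisj : Disjoint ({n} : Set ℕ) (Set.Iic m) := by simpa using hmn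
  exact indep_of_indep_of_le_left
    (indep_iSup_of_disjoint (fun i => (hX i).measurable.comap_le) hind hdisj)
    (le_iSup₂ (f := fun i (_ : i ∈ ({n} : Set ℕ)) => MeasurableSpace.comap (X i) mβ) n rfl)

lemma MeasureTheory.Adapted.of_recursion {Ω β γ : Type*} {mΩ : MeasurableSpace Ω}
    [MeasurableSpace β] [MeasurableSpace γ] {ℱ : Filtration ℕ mΩ} {X : ℕ → Ω → β}
    (hX : Adapted ℱ X) {F : β → γ → γ} (hF : Measurable (Function.uncurry F)) {v : ℕ → Ω → γ}
    (h0 : Measurable[ℱ 0] (v 0)) (hrec : ∀ n ω, v (n + 1) ω = F (X (n + 1) ω) (v n ω)) :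
    Adapted ℱ v := by
  intro n
  induction n with
  | zero => exact h0
  | succ n ih =>
    rw [show v (n + 1) = fun ω => F (X (n + 1) ω) (v n ω) from funext (hrec n)]
    exact hF.comp ((hX (n + 1)).prodMk (ih.mono (ℱ.mono n.le_succ) le_rfl))

section LazyWalk

variable {Ω : Type*} {mΩ : MeasurableSpace Ω} {P : Measure Ω}
  {A : Fin K → Fin K → ℝ} {π : Fin K → ℝ} {α : ℝ}

lemma integral_mul_upd_sub {ℱ : MeasurableSpace Ω} (hℱ : ℱ ≤ mΩ) {M : Ω → Fin K → Fin K → ℝ}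
    (hind : Indep (MeasurableSpace.comap M inferInstance) ℱ P)
    (hM_int : ∀ l r, Integrable (fun ω => M ω l r) P) (hmean : ∀ l r, ∫ ω, M ω l r ∂P = A l r)
    (hπfix : ∀ j, ∑ l, A j l * π l = π j) {X : Ω → ℝ} (hX : Measurable[ℱ] X)
    (hX_int : Integrable X P) {v : Ω → Fin K → ℝ} (hv : Measurable[ℱ] v)
    (hv_simplex : ∀ ω, v ω ∈ stdSimplex ℝ (Fin K)) :
    (fun l => ∫ ω, X ω * (upd α (M ω) (v ω) l - π l) ∂P)
      = lazyMatrix α A *ᵥ fun l => ∫ ω, X ω * (v ω l - π l) ∂P := by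
  rw [← upd_eq_mulVec]
  ext l
  have hXv_meas : ∀ r, Measurable[ℱ] fun ω => X ω * v ω r := fun r =>
    hX.mul ((measurable_pi_apply r).comp hv)
  have hXv_int : ∀ r, Integrable (fun ω => X ω * v ω r) P := fun r =>
    hX_int.mul_bdd (((measurable_pi_apply r).comp hv).mono hℱ le_rfl).aestronglyMeasurable
      (ae_of_all _ fun ω => by
        rw [Real.norm_of_nonneg ((hv_simplex ω).1 r)]
        exact (mem_Icc_of_mem_stdSimplex (hv_simplex ω) r).2)
  have hindep : ∀ r, IndepFun (fun ω => M ω l r) (fun ω => X ω * v ω r) P := fun r =>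
    indep_of_indep_of_le_right (indep_of_indep_of_le_left hind
      ((measurable_pi_apply r).comp ((measurable_pi_apply l).comp (comap_measurable M))).comap_le)
      (hXv_meas r).comap_le
  have hMXv_int : ∀ r, Integrable (fun ω => M ω l r * (X ω * v ω r)) P := fun r =>
    (hindep r).integrable_mul (hM_int l r) (hXv_int r)
  have hsum_int : Integrable (fun ω => (1 - α) * ∑ r, M ω l r * (X ω * v ω r)) P :=
    (integrable_finsetSum _ fun r _ => hMXv_int r).const_mul _
  have hlin_int : Integrable
      (fun ω => α * (X ω * v ω l) + (1 - α) * ∑ r, M ω l r * (X ω * v ω r)) P :=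
    ((hXv_int l).const_mul α).add hsum_int
  have hpt : ∀ ω, X ω * (upd α (M ω) (v ω) l - π l)
      = α * (X ω * v ω l) + (1 - α) * ∑ r, M ω l r * (X ω * v ω r) - π l * X ω := fun ω => by
    have hpull : ∑ r, M ω l r * (X ω * v ω r) = X ω * ∑ r, M ω l r * v ω r := by
      rw [Finset.mul_sum]
      exact Finset.sum_congr rfl fun r _ => mul_left_comm _ _ _
    rw [hpull]
    simp only [upd]
    ring
  have hcentre : ∀ r, ∫ ω, X ω * (v ω r - π r) ∂P
      = ∫ ω, X ω * v ω r ∂P - π r * ∫ ω, X ω ∂P := fun r => by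
    simp_rw [mul_sub]
    rw [integral_sub (hXv_int r) (hX_int.mul_const _), integral_mul_const, mul_comm]
  rw [integral_congr_ae (ae_of_all _ hpt),
    integral_sub hlin_int (hX_int.const_mul _),
    integral_add ((hXv_int l).const_mul α) hsum_int, integral_const_mul, integral_const_mul,
    integral_const_mul, integral_finsetSum _ fun r _ => hMXv_int r]
  simp_rw [fun r => (hindep r).integral_fun_mul_eq_mul_integral (hM_int l r).aestronglyMeasurable
    (hXv_int r).aestronglyMeasurable, hmean, upd, hcentre, mul_sub, Finset.sum_sub_distrib,
    ← mul_assoc, ← Finset.sum_mul, hπfix]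
  ring

lemma integral_mul_sub_eq_lazyMatrix_pow_mulVec {An : ℕ → Ω → Fin K → Fin K → ℝ}
    {w : ℕ → Ω → Fin K → ℝ} {ℱ : Filtration ℕ mΩ}
    (hind : ∀ n, Indep (MeasurableSpace.comap (An (n + 1)) inferInstance) (ℱ n) P)
    (hAn_int : ∀ n l r, Integrable (fun ω => An n ω l r) P)
    (hmean : ∀ n l r, ∫ ω, An n ω l r ∂P = A l r) (hπfix : ∀ j, ∑ l, A j l * π l = π j)
    (hw_adapted : Adapted ℱ w) (hw : ∀ n ω, w n ω ∈ stdSimplex ℝ (Fin K))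
    (hwrec : ∀ n ω, w (n + 1) ω = upd α (An (n + 1) ω) (w n ω)) {m : ℕ} {X : Ω → ℝ}
    (hX : Measurable[ℱ m] X) (hX_int : Integrable X P) (t : ℕ) :
    (fun l => ∫ ω, X ω * (w (m + t) ω l - π l) ∂P)
      = lazyMatrix α A ^ t *ᵥ fun l => ∫ ω, X ω * (w m ω l - π l) ∂P := by
  induction t with
  | zero => simp
  | succ t ih =>
    simp_rw [← add_assoc, hwrec]
    rw [integral_mul_upd_sub (ℱ.le (m + t)) (hind (m + t)) (hAn_int _) (hmean _) hπfix
      (hX.mono (ℱ.mono (m.le_add_right t)) le_rfl) hX_int (hw_adapted (m + t)) (hw (m + t)), ih,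
      Matrix.mulVec_mulVec, ← pow_succ']

variable [IsProbabilityMeasure P] {w : ℕ → Ω → Fin K → ℝ}

lemma integrable_sub_mul_sub (hw_meas : ∀ n, Measurable (w n))
    (hw : ∀ n ω, w n ω ∈ stdSimplex ℝ (Fin K)) (hπ : π ∈ stdSimplex ℝ (Fin K)) (n m : ℕ)
    (j r : Fin K) : Integrable (fun ω => (w n ω j - π j) * (w m ω r - π r)) P :=
  .of_bound (((measurable_pi_apply j).comp (hw_meas n)).sub_const _ |>.mul
      (((measurable_pi_apply r).comp (hw_meas m)).sub_const _)).aestronglyMeasurable 1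
    (ae_of_all _ fun ω => by
      rw [norm_mul, Real.norm_eq_abs, Real.norm_eq_abs]
      exact mul_le_one₀ (abs_sub_le_one_of_mem_stdSimplex_s1 (hw n ω) hπ j) (abs_nonneg _)
        (abs_sub_le_one_of_mem_stdSimplex_s1 (hw m ω) hπ r))

lemma integral_sum_sub_mul_sub_self_le (hw_meas : ∀ n, Measurable (w n))
    (hw : ∀ n ω, w n ω ∈ stdSimplex ℝ (Fin K)) (hπ : π ∈ stdSimplex ℝ (Fin K)) (n : ℕ) :
    ∫ ω, ∑ j, (w n ω j - π j) * (w n ω j - π j) ∂P ≤ 2 := by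
  calc ∫ ω, ∑ j, (w n ω j - π j) * (w n ω j - π j) ∂P ≤ ∫ _, (2 : ℝ) ∂P :=
        integral_mono
          (integrable_finsetSum _ fun j _ => integrable_sub_mul_sub hw_meas hw hπ n n j j)
          (integrable_const 2) fun ω => by simpa only [← sq] using sum_sq_sub_le_two (hw n ω) hπ
    _ = 2 := by simp

lemma integral_sum_sub_mul_sub_le {An : ℕ → Ω → Fin K → Fin K → ℝ} {ℱ : Filtration ℕ mΩ}
    (hind : ∀ n, Indep (MeasurableSpace.comap (An (n + 1)) inferInstance) (ℱ n) P)
    (hAn_int : ∀ n l r, Integrable (fun ω => An n ω l r) P)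
    (hmean : ∀ n l r, ∫ ω, An n ω l r ∂P = A l r) (hπfix : ∀ j, ∑ l, A j l * π l = π j)
    (hw_adapted : Adapted ℱ w) (hw : ∀ n ω, w n ω ∈ stdSimplex ℝ (Fin K))
    (hwrec : ∀ n ω, w (n + 1) ω = upd α (An (n + 1) ω) (w n ω)) (hπ : π ∈ stdSimplex ℝ (Fin K))
    {C ρ : ℝ} (hmix : ∀ v ∈ stdSimplex ℝ (Fin K), ∀ t,
      enorm' (lazyMatrix α A ^ t *ᵥ (v - π)) ≤ C * ρ ^ t) (n t : ℕ) :
    ∫ ω, ∑ j, (w n ω j - π j) * (w (n + t) ω j - π j) ∂P ≤ 2 * C * ρ ^ t := by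
  set B := lazyMatrix α A ^ t
  have hw_meas : ∀ n, Measurable (w n) := fun n => hw_adapted.measurable
  have hint := integrable_sub_mul_sub (P := P) hw_meas hw hπ
  have hX : ∀ j, Measurable[ℱ n] fun ω => w n ω j - π j := fun j =>
    ((measurable_pi_apply j).comp (hw_adapted n)).sub_const _
  have hX_int : ∀ j, Integrable (fun ω => w n ω j - π j) P := fun j =>
    .of_bound ((hX j).mono (ℱ.le n) le_rfl).aestronglyMeasurable 1
      (ae_of_all _ fun ω => abs_sub_le_one_of_mem_stdSimplex_s1 (hw n ω) hπ j)
  have hpt : ∀ ω, ∑ j, ∑ r, B j r * ((w n ω j - π j) * (w n ω r - π r)) ≤ 2 * C * ρ ^ t :=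
    fun ω => calc
      ∑ j, ∑ r, B j r * ((w n ω j - π j) * (w n ω r - π r))
          = ∑ j, (w n ω j - π j) * (B *ᵥ (w n ω - π)) j :=
        Finset.sum_congr rfl fun j _ => by
          simp only [Matrix.mulVec, dotProduct, Finset.mul_sum, Pi.sub_apply]
          exact Finset.sum_congr rfl fun r _ => by ring
      _ ≤ 2 * enorm' (B *ᵥ (w n ω - π)) := sum_sub_mul_le_two_mul_enorm' (hw n ω) hπ _
      _ ≤ 2 * C * ρ ^ t := by
        rw [mul_assoc]
        exact mul_le_mul_of_nonneg_left (hmix _ (hw n ω) t) zero_le_two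
  calc ∫ ω, ∑ j, (w n ω j - π j) * (w (n + t) ω j - π j) ∂P
      = ∑ j, ∫ ω, (w n ω j - π j) * (w (n + t) ω j - π j) ∂P :=
        integral_finsetSum _ fun j _ => hint n (n + t) j j
    _ = ∑ j, (B *ᵥ fun r => ∫ ω, (w n ω j - π j) * (w n ω r - π r) ∂P) j :=
        Finset.sum_congr rfl fun j _ => congrFun (integral_mul_sub_eq_lazyMatrix_pow_mulVec
          hind hAn_int hmean hπfix hw_adapted hw hwrec (hX j) (hX_int j) t) j
    _ = ∫ ω, ∑ j, ∑ r, B j r * ((w n ω j - π j) * (w n ω r - π r)) ∂P := by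
        rw [integral_finsetSum (f := fun j ω => ∑ r, B j r * ((w n ω j - π j) * (w n ω r - π r)))
          _ fun j _ => integrable_finsetSum _ fun r _ => (hint n n j r).const_mul _]
        simp_rw [integral_finsetSum _ fun r _ => (hint n n _ r).const_mul _, integral_const_mul]
        rfl
    _ ≤ ∫ _, 2 * C * ρ ^ t ∂P := integral_mono (integrable_finsetSum _ fun j _ =>
          integrable_finsetSum _ fun r _ => (hint n n j r).const_mul _) (integrable_const _) hpt
    _ = 2 * C * ρ ^ t := by simp

end LazyWalk

theorem statement1_general
    {Ω : Type*} [MeasurableSpace Ω] (P : Measure Ω) [IsProbabilityMeasure P]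
    (A : Fin K → Fin K → ℝ)
    (π : Fin K → ℝ) (hπpos : ∀ j, 0 < π j) (hπsum : ∑ j, π j = 1)
    (hπfix : ∀ j, ∑ l, A j l * π l = π j)
    (An : ℕ → Ω → Fin K → Fin K → ℝ) (hmeas : ∀ n, Measurable (An n))
    (hval : ∀ n ω, LeftStochastic (An n ω) ∧ ZeroOne (An n ω))
    (hiid : iIndepFun An P)
    (hmean : ∀ n l k, ∫ ω, An n ω l k ∂P = A l k)
    (α : ℝ) (hα0 : 0 ≤ α) (hα1 : α < 1) (k : Fin K)
    (w : ℕ → Ω → Fin K → ℝ)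
    (hw0 : ∀ ω, w 0 ω = fun j => if j = k then (1 : ℝ) else 0)
    (hwrec : ∀ n ω, w (n + 1) ω = upd α (An (n + 1) ω) (w n ω))
    (C ρ : ℝ) (hC : 0 < C) (hρ0 : 0 < ρ) (hρ1 : ρ < 1)
    (hmix : ∀ v : Fin K → ℝ, (∀ j, 0 ≤ v j) → (∑ j, v j = 1) → ∀ m : ℕ,
      enorm' (((α • (1 : Matrix (Fin K) (Fin K) ℝ) + (1 - α) • Matrix.of A) ^ m).mulVec
          (fun l => v l - π l)) ≤ C * ρ ^ m) :
    ∀ ε : ℝ, 0 < ε → ∀ i : ℕ, 1 ≤ i →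
      (P {ω | ε < ∑ j, ((i : ℝ)⁻¹ * (∑ n ∈ Finset.Icc 1 i, w n ω j) - π j) ^ 2}).toReal
        ≤ (4 + 4 * C * ρ / (1 - ρ)) / (ε * i) := by
  intro ε hε i hi
  have hπ : π ∈ stdSimplex ℝ (Fin K) := ⟨fun j => (hπpos j).le, hπsum⟩
  have hw : ∀ n ω, w n ω ∈ stdSimplex ℝ (Fin K) := fun n ω =>
    mem_stdSimplex_of_upd_recursion (v := (w · ω)) hα0 hα1.le (fun n => (hval n ω).1)
      (by rw [hw0, ← funext (Pi.single_apply k (1 : ℝ))]; exact single_mem_stdSimplex ℝ k)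
      (fun n => hwrec n ω) n
  let ℱ := Filtration.natural An fun n => (hmeas n).stronglyMeasurable
  have hw_adapted : Adapted ℱ w :=
    (Filtration.stronglyAdapted_natural _).adapted.of_recursion (measurable_upd α)
      (by simp only [funext hw0]; exact measurable_const) hwrec
  have hw_meas : ∀ n, Measurable (w n) := fun n => hw_adapted.measurable
  have hcov := integral_sum_sub_mul_sub_le (fun n => hiid.indep_comap_natural _ n.lt_succ_self)
    (fun n => integrable_apply_of_leftStochastic (hmeas n) fun ω => (hval n ω).1) hmean hπfix
    hw_adapted hw hwrec hπ fun v hv => hmix v hv.1 hv.2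
  have hbound := measureReal_lt_sum_sq_average_sub_le (P := P) (by positivity) hρ0.le hρ1
    (fun n m => integrable_finsetSum _ fun j _ =>
      integrable_sub_mul_sub hw_meas hw hπ n m j j)
    (integral_sum_sub_mul_sub_self_le hw_meas hw hπ)
    (fun n t => hcov n (t + 1)) (s := Finset.Icc 1 i) ⟨1, by simp [hi]⟩ hε
  rw [Nat.card_Icc, Nat.add_sub_cancel] at hbound
  refine hbound.trans (div_le_div_of_nonneg_right ?_ (by positivity))
  have : 0 ≤ C * ρ / (1 - ρ) := div_nonneg (by positivity) (sub_nonneg.2 hρ1.le)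
  linarith [show 2 * (2 * C * ρ / (1 - ρ)) = 4 * (C * ρ / (1 - ρ)) by ring,
    show 4 * C * ρ / (1 - ρ) = 4 * (C * ρ / (1 - ρ)) by ring]

/-- Markov-type bound on the deviation of the Cesàro average of the random
probability vectors `w_n` from the Perron vector `π`, given the geometric mixing bound
`‖(αI + (1-α)A)^j (w - π)‖ ≤ C ρ^j` for all probability vectors `w`. -/
theorem statement1 [NeZero K]
    {Ω : Type*} [MeasurableSpace Ω] (P : Measure Ω) [IsProbabilityMeasure P]
    (A : Fin K → Fin K → ℝ) (hA : LeftStochastic A) (hAsc : StronglyConnected A)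
    (π : Fin K → ℝ) (hπpos : ∀ j, 0 < π j) (hπsum : ∑ j, π j = 1)
    (hπfix : ∀ j, ∑ l, A j l * π l = π j)
    (An : ℕ → Ω → Fin K → Fin K → ℝ) (hmeas : ∀ n, Measurable (An n))
    (hval : ∀ n ω, LeftStochastic (An n ω) ∧ ZeroOne (An n ω))
    (hiid : iIndepFun An P)
    (hid : ∀ n, IdentDistrib (An n) (An 1) P P)
    (hmean : ∀ n l k, ∫ ω, An n ω l k ∂P = A l k)
    (α : ℝ) (hα0 : 0 ≤ α) (hα1 : α < 1) (k : Fin K)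
    (w : ℕ → Ω → Fin K → ℝ)
    (hw0 : ∀ ω, w 0 ω = fun j => if j = k then (1 : ℝ) else 0)
    (hwrec : ∀ n ω, w (n + 1) ω = upd α (An (n + 1) ω) (w n ω))
    (C ρ : ℝ) (hC : 0 < C) (hρ0 : 0 < ρ) (hρ1 : ρ < 1)
    (hmix : ∀ v : Fin K → ℝ, (∀ j, 0 ≤ v j) → (∑ j, v j = 1) → ∀ m : ℕ,
      enorm' (((α • (1 : Matrix (Fin K) (Fin K) ℝ) + (1 - α) • Matrix.of A) ^ m).mulVec
          (fun l => v l - π l)) ≤ C * ρ ^ m) :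
    ∀ ε : ℝ, 0 < ε → ∀ i : ℕ, 1 ≤ i →
      (P {ω | ε < ∑ j, ((i : ℝ)⁻¹ * (∑ n ∈ Finset.Icc 1 i, w n ω j) - π j) ^ 2}).toReal
        ≤ (4 + 4 * C * ρ / (1 - ρ)) / (ε * i) :=
  statement1_general P A π hπpos hπsum hπfix An hmeas hval hiid hmean α hα0 hα1 k w hw0 hwrec C ρ hC
    hρ0 hρ1 hmix
end
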